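/- arXiv:math/0110090 — 3 statements merged into one kernel-verified Lean document; each statement's English description precedes it below -/
import Mathlib

section
/- Let Q be a convolution operator on ℝ³ with kernel supported in the ball of radius R. Then for any p ∈ [1,∞], ‖[Q,w]v‖_{L^p} ≤ C·R·‖∇w‖_{L^p}·‖v‖_{L^∞}, i.e. the commutator estimate also holds with the roles of the Lebesgue exponents on ∇w and v exchanged. -/
open MeasureTheory
open scoped NNReal ENNReal

lemma aux_jensen {β : Type*} [MeasurableSpace β] (μ : Measure β) {f : β → ℝ≥0∞}
    (hf : AEMeasurable f μ) {q : ℝ} (hq : 1 ≤ q) :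
    (∫⁻ b, f b ∂μ) ^ q ≤ μ Set.univ ^ (q - 1) * ∫⁻ b, f b ^ q ∂μ := by
  rcases eq_or_lt_of_le hq with h1 | h1
  · simp [← h1]
  · have hq0 : (0:ℝ) < q := lt_trans one_pos h1
    have hpq : q.HolderConjugate (q / (q - 1)) := Real.HolderConjugate.conjExponent h1
    have h := ENNReal.lintegral_mul_le_Lp_mul_Lq μ hpq hf aemeasurable_const (g := fun _ => 1)
    simp only [Pi.mul_apply, mul_one, ENNReal.one_rpow, lintegral_const, one_mul] at h
    have hdiv : q / (q / (q - 1)) = q - 1 := by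
      field_simp
    calc (∫⁻ b, f b ∂μ) ^ q
        ≤ ((∫⁻ b, f b ^ q ∂μ) ^ (1 / q) * (μ Set.univ) ^ (1 / (q / (q - 1)))) ^ q :=
          ENNReal.rpow_le_rpow h (le_of_lt hq0)
      _ = μ Set.univ ^ (q - 1) * ∫⁻ b, f b ^ q ∂μ := by
          rw [ENNReal.mul_rpow_of_nonneg _ _ (le_of_lt hq0), ← ENNReal.rpow_mul,
            ← ENNReal.rpow_mul, one_div_mul_cancel (ne_of_gt hq0), ENNReal.rpow_one,
            one_div, inv_mul_eq_div, hdiv, mul_comm]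

lemma aux_mvt {w : (Fin 3 → ℝ) → ℝ} (hw : Differentiable ℝ w) (x z : Fin 3 → ℝ) :
    (‖w (x - z) - w x‖₊ : ℝ≥0∞) ≤
      ENNReal.ofReal ‖z‖ * ∫⁻ τ in Set.Ioc (0:ℝ) 1, (‖fderiv ℝ w (x - τ • z)‖₊ : ℝ≥0∞) := by
  by_cases hz : z = 0
  · simp [hz]
  set I := ∫⁻ τ in Set.Ioc (0:ℝ) 1, (‖fderiv ℝ w (x - τ • z)‖₊ : ℝ≥0∞) with hIdef
  by_cases hI : I = ∞
  · rw [hI, ENNReal.mul_top (by simpa using norm_pos_iff.2 hz : ENNReal.ofReal ‖z‖ ≠ 0)]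
    exact le_top
  have hg : ∀ τ : ℝ, HasDerivAt (fun t : ℝ => x - t • z) (-z) τ := by
    intro τ
    have h1 : HasDerivAt (fun t : ℝ => t • z) z τ := by
      simpa using (hasDerivAt_id τ).smul_const z
    simpa using h1.const_sub x
  have hφ : ∀ τ : ℝ, HasDerivAt (fun t : ℝ => w (x - t • z))
      (fderiv ℝ w (x - τ • z) (-z)) τ := fun τ =>
    (hw (x - τ • z)).hasFDerivAt.comp_hasDerivAt τ (hg τ)
  have hmeas : Measurable fun τ : ℝ => fderiv ℝ w (x - τ • z) (-z) := by
    exact (measurable_fderiv_apply_const ℝ w (-z)).comp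
      (by fun_prop : Measurable fun τ : ℝ => x - τ • z)
  have hbound : ∀ τ : ℝ, (‖fderiv ℝ w (x - τ • z) (-z)‖₊ : ℝ≥0∞) ≤
      (‖fderiv ℝ w (x - τ • z)‖₊ : ℝ≥0∞) * (‖z‖₊ : ℝ≥0∞) := by
    intro τ
    have := (fderiv ℝ w (x - τ • z)).le_opNNNorm (-z)
    simpa [nnnorm_neg] using ENNReal.coe_le_coe.2 this
  have hint : IntervalIntegrable (fun τ => fderiv ℝ w (x - τ • z) (-z)) volume 0 1 := by
    rw [intervalIntegrable_iff_integrableOn_Ioc_of_le zero_le_one]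
    refine ⟨hmeas.aestronglyMeasurable.restrict, ?_⟩
    rw [HasFiniteIntegral]
    calc ∫⁻ τ in Set.Ioc (0:ℝ) 1, (‖fderiv ℝ w (x - τ • z) (-z)‖₊ : ℝ≥0∞)
        ≤ ∫⁻ τ in Set.Ioc (0:ℝ) 1, (‖fderiv ℝ w (x - τ • z)‖₊ : ℝ≥0∞) * (‖z‖₊ : ℝ≥0∞) :=
          lintegral_mono fun τ => hbound τ
      _ = I * ‖z‖₊ := lintegral_mul_const' _ _ (by simp)
      _ < ∞ := ENNReal.mul_lt_top (lt_of_le_of_ne le_top hI) ENNReal.coe_lt_top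
  have heq : w (x - z) - w x = ∫ τ in (0:ℝ)..1, fderiv ℝ w (x - τ • z) (-z) := by
    have h := intervalIntegral.integral_eq_sub_of_hasDerivAt (fun τ _ => hφ τ) hint
    rw [h]
    simp
  calc (‖w (x - z) - w x‖₊ : ℝ≥0∞)
      = ‖∫ τ in Set.Ioc (0:ℝ) 1, fderiv ℝ w (x - τ • z) (-z)‖₊ := by
        rw [heq, intervalIntegral.integral_of_le zero_le_one]
    _ ≤ ∫⁻ τ in Set.Ioc (0:ℝ) 1, (‖fderiv ℝ w (x - τ • z) (-z)‖₊ : ℝ≥0∞) :=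
        enorm_integral_le_lintegral_enorm _
    _ ≤ ∫⁻ τ in Set.Ioc (0:ℝ) 1, (‖fderiv ℝ w (x - τ • z)‖₊ : ℝ≥0∞) * (‖z‖₊ : ℝ≥0∞) :=
        lintegral_mono fun τ => hbound τ
    _ = ENNReal.ofReal ‖z‖ * I := by
        rw [lintegral_mul_const' _ _ (by simp), mul_comm, ofReal_norm, enorm_eq_nnnorm]

/-- Commutator estimate with exchanged Lebesgue exponents: for a convolution operator
with integrable kernel supported in the ball of radius `R`,
`‖[Q,w]v‖_{L^p} ≤ C·R·‖∇w‖_{L^p}·‖v‖_{L^∞}`. -/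
theorem commutator_Lp_estimate_exchanged
    (k : (Fin 3 → ℝ) → ℝ) (R : ℝ) (hR : 0 ≤ R)
    (hk : Integrable k) (hsupp : ∀ x, k x ≠ 0 → ‖x‖ ≤ R) :
    ∃ C : ℝ≥0, 0 < C ∧ ∀ (p : ℝ≥0∞), 1 ≤ p →
      ∀ (w v : (Fin 3 → ℝ) → ℝ), Differentiable ℝ w →
        MemLp (fun x => ‖fderiv ℝ w x‖) p volume → MemLp v ∞ volume →
        eLpNorm
          (fun x => (∫ y, k (x - y) * (w y * v y)) - w x * ∫ y, k (x - y) * v y)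
          p volume
        ≤ (C : ℝ≥0∞) * ENNReal.ofReal R *
            eLpNorm (fun x => ‖fderiv ℝ w x‖) p volume * eLpNorm v ∞ volume := by
  classical
  set L : ℝ≥0∞ := ∫⁻ x, (‖k x‖₊ : ℝ≥0∞) with hLdef
  have hLfin : L ≠ ∞ := hk.2.ne
  refine ⟨L.toNNReal + 1, by positivity, ?_⟩
  set C : ℝ≥0 := L.toNNReal + 1 with hCdef
  have hCne : (C : ℝ≥0∞) ≠ 0 := by simp [hCdef]
  have hCnetop : (C : ℝ≥0∞) ≠ ∞ := ENNReal.coe_ne_top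
  have hLC : L ≤ (C : ℝ≥0∞) := by
    rw [hCdef, ENNReal.coe_add]
    exact le_trans (le_of_eq (ENNReal.coe_toNNReal hLfin).symm) le_self_add
  intro p hp w v hw hMw hMv
  have hp0 : p ≠ 0 := fun h => by simp [h] at hp
  -- measurable representatives
  set V : (Fin 3 → ℝ) → ℝ := hMv.1.mk v with hVdef
  have hVmeas : Measurable V := hMv.1.stronglyMeasurable_mk.measurable
  have hvV : v =ᵐ[volume] V := hMv.1.ae_eq_mk
  set K : (Fin 3 → ℝ) → ℝ := (Metric.closedBall (0 : Fin 3 → ℝ) R).indicator (hk.1.mk k)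
    with hKdef
  have hKmeas : Measurable K :=
    (hk.1.stronglyMeasurable_mk.measurable).indicator measurableSet_closedBall
  have hkK : k =ᵐ[volume] K := by
    filter_upwards [hk.1.ae_eq_mk] with a ha
    by_cases hb : a ∈ Metric.closedBall (0 : Fin 3 → ℝ) R
    · rw [hKdef, Set.indicator_of_mem hb]; exact ha
    · rw [hKdef, Set.indicator_of_notMem hb]
      by_contra hka
      exact hb (mem_closedBall_zero_iff.2 (hsupp a hka))
  have hKsupp : ∀ z, K z ≠ 0 → ‖z‖ ≤ R := by
    intro z hz
    by_contra h
    exact hz (Set.indicator_of_notMem (fun hmem => h (mem_closedBall_zero_iff.1 hmem)) _)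
  have hKint : Integrable K := hk.congr hkK
  have hLK : (∫⁻ z, (‖K z‖₊ : ℝ≥0∞)) = L := by
    rw [hLdef]
    exact (lintegral_congr_ae (hkK.mono fun a ha => by rw [ha])).symm
  -- rewrite the goal in terms of `K` and `V`
  have hiKx : ∀ x : Fin 3 → ℝ, ∀ᵐ y : Fin 3 → ℝ, k (x - y) = K (x - y) := fun x =>
    (Measure.measurePreserving_sub_left volume x).quasiMeasurePreserving.ae hkK
  have hgoalL : (fun x => (∫ y, k (x - y) * (w y * v y)) - w x * ∫ y, k (x - y) * v y)
      = fun x => (∫ y, K (x - y) * (w y * V y)) - w x * ∫ y, K (x - y) * V y := by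
    funext x
    have h1 : ∫ y, k (x - y) * (w y * v y) = ∫ y, K (x - y) * (w y * V y) := by
      refine integral_congr_ae ?_
      filter_upwards [hiKx x, hvV] with y h1 h2
      rw [h1, h2]
    have h2 : ∫ y, k (x - y) * v y = ∫ y, K (x - y) * V y := by
      refine integral_congr_ae ?_
      filter_upwards [hiKx x, hvV] with y h1 h2
      rw [h1, h2]
    rw [h1, h2]
  rw [hgoalL, eLpNorm_congr_ae hvV]
  -- basic quantities
  set Mv : ℝ≥0∞ := eLpNorm V ∞ volume with hMvdef
  have hMvV : MemLp V ∞ volume := hMv.ae_eq hvV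
  have hMvfin : Mv ≠ ∞ := hMvV.2.ne
  have hVbd : ∀ᵐ y, (‖V y‖₊ : ℝ≥0∞) ≤ Mv := by
    rw [hMvdef, eLpNorm_exponent_top]
    exact enorm_ae_le_eLpNormEssSup V volume
  set mv : ℝ := Mv.toReal with hmvdef
  have hmv0 : 0 ≤ mv := ENNReal.toReal_nonneg
  have hVbdr : ∀ᵐ y, |V y| ≤ mv := by
    filter_upwards [hVbd] with y hy
    have h := ENNReal.toReal_mono hMvfin hy
    simpa [Real.norm_eq_abs] using h
  have hdw : Measurable fun y => (‖fderiv ℝ w y‖₊ : ℝ≥0∞) :=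
    (measurable_fderiv ℝ w).nnnorm.coe_nnreal_ennreal
  -- the auxiliary measures
  set ρ : Measure ℝ := volume.restrict (Set.Ioc (0:ℝ) 1) with hρdef
  haveI : IsFiniteMeasure ρ := ⟨by rw [hρdef, Measure.restrict_apply_univ]; simp⟩
  set ν : Measure (Fin 3 → ℝ) := volume.withDensity (fun z => (‖K z‖₊ : ℝ≥0∞)) with hνdef
  have hνuniv : ν Set.univ = L := by
    rw [hνdef, withDensity_apply _ MeasurableSet.univ, setLIntegral_univ, hLK]
  haveI : IsFiniteMeasure ν := ⟨by rw [hνuniv]; exact lt_of_le_of_ne le_top hLfin⟩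
  set σ : Measure ((Fin 3 → ℝ) × ℝ) := ν.prod ρ with hσdef
  have hρuniv : ρ Set.univ = 1 := by rw [hρdef, Measure.restrict_apply_univ]; simp
  have hσuniv : σ Set.univ = L := by
    rw [hσdef, ← Set.univ_prod_univ, Measure.prod_prod, hνuniv, hρuniv, mul_one]
  -- the majorant
  set Φ : (Fin 3 → ℝ) × ((Fin 3 → ℝ) × ℝ) → ℝ≥0∞ := fun q =>
    (‖fderiv ℝ w (q.1 - q.2.2 • q.2.1)‖₊ : ℝ≥0∞) * (‖V (q.1 - q.2.1)‖₊ : ℝ≥0∞) with hΦdef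
  have hΦmeas : Measurable Φ := by
    apply Measurable.fun_mul
    · exact hdw.comp
        (by fun_prop : Measurable fun q : (Fin 3 → ℝ) × ((Fin 3 → ℝ) × ℝ) => q.1 - q.2.2 • q.2.1)
    · exact (hVmeas.comp
        (by fun_prop :
          Measurable fun q : (Fin 3 → ℝ) × ((Fin 3 → ℝ) × ℝ) => q.1 - q.2.1)).nnnorm.coe_nnreal_ennreal
  set H : (Fin 3 → ℝ) → ℝ≥0∞ := fun x => ∫⁻ zτ, Φ (x, zτ) ∂σ with hHdef
  have hHmeas : Measurable H :=
    Measurable.lintegral_prod_right (f := fun x zτ => Φ (x, zτ)) hΦmeas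
  have hHx : ∀ x, H x = ∫⁻ z, (‖K z‖₊ : ℝ≥0∞) *
      ((∫⁻ τ in Set.Ioc (0:ℝ) 1, (‖fderiv ℝ w (x - τ • z)‖₊ : ℝ≥0∞)) *
        (‖V (x - z)‖₊ : ℝ≥0∞)) := by
    intro x
    have hsec : Measurable fun zτ : (Fin 3 → ℝ) × ℝ => Φ (x, zτ) :=
      hΦmeas.comp measurable_prodMk_left
    have hin : Measurable fun z : Fin 3 → ℝ => ∫⁻ τ, Φ (x, (z, τ)) ∂ρ :=
      Measurable.lintegral_prod_right (f := fun z τ => Φ (x, (z, τ)))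
        (hsec.comp measurable_id)
    show ∫⁻ zτ, Φ (x, zτ) ∂σ = _
    rw [hσdef, lintegral_prod _ hsec.aemeasurable, hνdef,
      lintegral_withDensity_eq_lintegral_mul _ (hKmeas.nnnorm.coe_nnreal_ennreal) hin]
    refine lintegral_congr fun z => ?_
    simp only [Pi.mul_apply, hΦdef, hρdef]
    rw [lintegral_mul_const' (‖V (x - z)‖₊ : ℝ≥0∞) _ ENNReal.coe_ne_top]
  -- Step A: pointwise identity for the commutator
  have hKx : ∀ x : Fin 3 → ℝ, Integrable fun y => K (x - y) := fun x =>
    ((Measure.measurePreserving_sub_left volume x).integrable_comp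
      hKint.aestronglyMeasurable).mpr hKint
  have hA : ∀ x : Fin 3 → ℝ, (∫ y, K (x - y) * (w y * V y)) - w x * ∫ y, K (x - y) * V y
      = ∫ z, K z * ((w (x - z) - w x) * V (x - z)) := by
    intro x
    obtain ⟨c, hc⟩ := (isCompact_closedBall x R).exists_bound_of_continuousOn
      hw.continuous.continuousOn
    have hc0 : 0 ≤ c := le_trans (norm_nonneg _) (hc x (by simp [hR]))
    have hKxm : Measurable fun y => K (x - y) :=
      hKmeas.comp (measurable_const.sub measurable_id)
    have hbd1 : Integrable (fun y => K (x - y) * (w y * V y)) := by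
      refine Integrable.mono' ((hKx x).abs.mul_const (c * mv)) ?_ ?_
      · exact (hKxm.mul ((hw.continuous.measurable).mul hVmeas)).aestronglyMeasurable
      · filter_upwards [hVbdr] with y hy
        by_cases hK0 : K (x - y) = 0
        · simp only [hK0, zero_mul, norm_zero, abs_zero]
          positivity
        · have hyB : y ∈ Metric.closedBall x R := by
            rw [Metric.mem_closedBall, dist_eq_norm, ← norm_sub_rev]
            exact hKsupp _ hK0
          have hwc : |w y| ≤ c := by simpa [Real.norm_eq_abs] using hc y hyB
          calc ‖K (x - y) * (w y * V y)‖ = |K (x - y)| * (|w y| * |V y|) := by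
                simp [Real.norm_eq_abs, abs_mul]
            _ ≤ |K (x - y)| * (c * mv) := by
                refine mul_le_mul_of_nonneg_left ?_ (abs_nonneg _)
                exact mul_le_mul hwc hy (abs_nonneg _) hc0
    have hbd2 : Integrable (fun y => K (x - y) * V y) := by
      refine Integrable.mono' ((hKx x).abs.mul_const mv) ?_ ?_
      · exact (hKxm.mul hVmeas).aestronglyMeasurable
      · filter_upwards [hVbdr] with y hy
        calc ‖K (x - y) * V y‖ = |K (x - y)| * |V y| := by
              simp [Real.norm_eq_abs, abs_mul]
          _ ≤ |K (x - y)| * mv := mul_le_mul_of_nonneg_left hy (abs_nonneg _)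
    calc (∫ y, K (x - y) * (w y * V y)) - w x * ∫ y, K (x - y) * V y
        = ∫ y, (K (x - y) * (w y * V y) - w x * (K (x - y) * V y)) := by
          rw [integral_sub hbd1 (hbd2.const_mul (w x)), integral_const_mul]
      _ = ∫ y, (fun z => K z * ((w (x - z) - w x) * V (x - z))) (x - y) := by
          refine integral_congr_ae (Filter.Eventually.of_forall fun y => ?_)
          simp only [sub_sub_cancel]
          ring
      _ = ∫ z, K z * ((w (x - z) - w x) * V (x - z)) := by
          exact integral_sub_left_eq_self
            (fun z => K z * ((w (x - z) - w x) * V (x - z))) volume x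
  -- Step B: pointwise enorm bound by the majorant
  have hkey : ∀ x, (‖(∫ y, K (x - y) * (w y * V y)) - w x * ∫ y, K (x - y) * V y‖₊ : ℝ≥0∞)
      ≤ ENNReal.ofReal R * H x := by
    intro x
    rw [hA x]
    calc (‖∫ z, K z * ((w (x - z) - w x) * V (x - z))‖₊ : ℝ≥0∞)
        ≤ ∫⁻ z, (‖K z * ((w (x - z) - w x) * V (x - z))‖₊ : ℝ≥0∞) :=
          enorm_integral_le_lintegral_enorm _
      _ ≤ ∫⁻ z, ENNReal.ofReal R * ((‖K z‖₊ : ℝ≥0∞) *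
            ((∫⁻ τ in Set.Ioc (0:ℝ) 1, (‖fderiv ℝ w (x - τ • z)‖₊ : ℝ≥0∞)) *
              (‖V (x - z)‖₊ : ℝ≥0∞))) := by
          refine lintegral_mono fun z => ?_
          by_cases hK0 : K z = 0
          · simp [hK0]
          · have hzR : ENNReal.ofReal ‖z‖ ≤ ENNReal.ofReal R :=
              ENNReal.ofReal_le_ofReal (hKsupp z hK0)
            have h1 : (‖w (x - z) - w x‖₊ : ℝ≥0∞) ≤
                ENNReal.ofReal R *
                  ∫⁻ τ in Set.Ioc (0:ℝ) 1, (‖fderiv ℝ w (x - τ • z)‖₊ : ℝ≥0∞) :=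
              (aux_mvt hw x z).trans (mul_le_mul_left hzR _)
            calc (‖K z * ((w (x - z) - w x) * V (x - z))‖₊ : ℝ≥0∞)
                = (‖K z‖₊ : ℝ≥0∞) * ((‖w (x - z) - w x‖₊ : ℝ≥0∞) *
                    (‖V (x - z)‖₊ : ℝ≥0∞)) := by
                  simp [nnnorm_mul]
              _ ≤ (‖K z‖₊ : ℝ≥0∞) * ((ENNReal.ofReal R *
                    ∫⁻ τ in Set.Ioc (0:ℝ) 1, (‖fderiv ℝ w (x - τ • z)‖₊ : ℝ≥0∞)) *
                    (‖V (x - z)‖₊ : ℝ≥0∞)) :=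
                  mul_le_mul_right (mul_le_mul_left h1 _) _
              _ = ENNReal.ofReal R * ((‖K z‖₊ : ℝ≥0∞) *
                    ((∫⁻ τ in Set.Ioc (0:ℝ) 1, (‖fderiv ℝ w (x - τ • z)‖₊ : ℝ≥0∞)) *
                      (‖V (x - z)‖₊ : ℝ≥0∞))) := by ring
      _ = ENNReal.ofReal R * H x := by
          rw [lintegral_const_mul' _ _ ENNReal.ofReal_ne_top, hHx x]
  -- split on whether `p` is infinite
  rcases eq_or_ne p ∞ with hptop | hptop
  · -- case `p = ∞`
    rw [hptop]
    set Mw : ℝ≥0∞ := eLpNorm (fun x => ‖fderiv ℝ w x‖) ∞ volume with hMwdef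
    have hwbd : ∀ᵐ y, (‖fderiv ℝ w y‖₊ : ℝ≥0∞) ≤ Mw := by
      rw [hMwdef, eLpNorm_exponent_top]
      have h := enorm_ae_le_eLpNormEssSup (fun x => ‖fderiv ℝ w x‖) volume
      simpa [nnnorm_norm, enorm_eq_nnnorm] using h
    have hsec : ∀ zτ : (Fin 3 → ℝ) × ℝ, ∀ᵐ x : Fin 3 → ℝ, Φ (x, zτ) ≤ Mw * Mv := by
      intro zτ
      have h1 : ∀ᵐ x : Fin 3 → ℝ, (‖fderiv ℝ w (x - zτ.2 • zτ.1)‖₊ : ℝ≥0∞) ≤ Mw :=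
        (measurePreserving_sub_right volume (zτ.2 • zτ.1)).quasiMeasurePreserving.ae hwbd
      have h2 : ∀ᵐ x : Fin 3 → ℝ, (‖V (x - zτ.1)‖₊ : ℝ≥0∞) ≤ Mv :=
        (measurePreserving_sub_right volume zτ.1).quasiMeasurePreserving.ae hVbd
      filter_upwards [h1, h2] with x hx1 hx2
      exact mul_le_mul' hx1 hx2
    set s : Set (((Fin 3 → ℝ) × ℝ) × (Fin 3 → ℝ)) := {q | Mw * Mv < Φ (q.2, q.1)} with hsdef
    have hs : MeasurableSet s :=
      measurableSet_lt measurable_const (hΦmeas.comp (measurable_snd.prodMk measurable_fst))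
    have hnull : (σ.prod volume) s = 0 := by
      rw [Measure.measure_prod_null hs]
      refine Filter.Eventually.of_forall fun zτ => ?_
      have h := hsec zτ
      rw [ae_iff] at h
      convert h using 2
      ext x
      simp [hsdef, not_le]
      rfl
    have hswap : (volume.prod σ) (Prod.swap ⁻¹' s) = 0 := by
      have hmapeq : (σ.prod volume) s = (volume.prod σ) (Prod.swap ⁻¹' s) := by
        rw [← Measure.prod_swap, Measure.map_apply measurable_swap hs]
      rw [← hmapeq]
      exact hnull
    have haeH : ∀ᵐ x : Fin 3 → ℝ, H x ≤ Mw * Mv * L := by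
      have h1 := Measure.measure_ae_null_of_prod_null hswap
      filter_upwards [h1] with x hx
      have hae : ∀ᵐ zτ ∂σ, Φ (x, zτ) ≤ Mw * Mv := by
        rw [ae_iff]
        convert hx using 2
        ext zτ
        simp [hsdef, not_le, Prod.swap]
        rfl
      calc H x ≤ ∫⁻ _zτ, Mw * Mv ∂σ := lintegral_mono_ae hae
        _ = Mw * Mv * L := by rw [lintegral_const, hσuniv]
    rw [eLpNorm_exponent_top]
    have hfin : eLpNormEssSup
        (fun x => (∫ y, K (x - y) * (w y * V y)) - w x * ∫ y, K (x - y) * V y) volume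
        ≤ ENNReal.ofReal R * (Mw * Mv * L) := by
      refine essSup_le_of_ae_le _ ?_
      filter_upwards [haeH] with x hx
      exact le_trans (hkey x) (mul_le_mul_right hx _)
    refine le_trans hfin ?_
    calc ENNReal.ofReal R * (Mw * Mv * L) ≤ ENNReal.ofReal R * (Mw * Mv * C) :=
          mul_le_mul_right (mul_le_mul_right hLC _) _
      _ = (C : ℝ≥0∞) * ENNReal.ofReal R * Mw * Mv := by ring
  · -- case `p` finite
    have hq : 1 ≤ p.toReal := by
      rw [← ENNReal.toReal_one]
      exact ENNReal.toReal_mono hptop hp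
    set q : ℝ := p.toReal with hqdef
    have hq0 : (0:ℝ) < q := lt_of_lt_of_le one_pos hq
    have hq0' : q ≠ 0 := ne_of_gt hq0
    set Iw : ℝ≥0∞ := ∫⁻ y, (‖fderiv ℝ w y‖₊ : ℝ≥0∞) ^ q with hIwdef
    have hMwq : eLpNorm (fun x => ‖fderiv ℝ w x‖) p volume = Iw ^ (1/q) := by
      rw [eLpNorm_eq_lintegral_rpow_enorm_toReal hp0 hptop, hIwdef]
      simp [nnnorm_norm, one_div]
      rfl
    have hΦq : Measurable fun q' : (Fin 3 → ℝ) × ((Fin 3 → ℝ) × ℝ) => Φ q' ^ q :=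
      hΦmeas.pow_const q
    have step1 : (∫⁻ x, (‖(∫ y, K (x - y) * (w y * V y)) -
          w x * ∫ y, K (x - y) * V y‖₊ : ℝ≥0∞) ^ q)
        ≤ (ENNReal.ofReal R) ^ q * ∫⁻ x, H x ^ q := by
      rw [← lintegral_const_mul' _ _
        (ENNReal.rpow_ne_top_of_nonneg hq0.le ENNReal.ofReal_ne_top)]
      refine lintegral_mono fun x => ?_
      rw [← ENNReal.mul_rpow_of_nonneg _ _ hq0.le]
      exact ENNReal.rpow_le_rpow (hkey x) hq0.le
    have step2 : ∀ x, H x ^ q ≤ L ^ (q - 1) * ∫⁻ zτ, Φ (x, zτ) ^ q ∂σ := by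
      intro x
      have h := aux_jensen σ (f := fun zτ => Φ (x, zτ)) ((hΦmeas.comp measurable_prodMk_left).aemeasurable) hq
      rwa [hσuniv] at h
    have step3 : ∫⁻ x, H x ^ q ≤ L ^ (q-1) * ∫⁻ x, ∫⁻ zτ, Φ (x, zτ) ^ q ∂σ := by
      calc ∫⁻ x, H x ^ q ≤ ∫⁻ x, L ^ (q-1) * ∫⁻ zτ, Φ (x, zτ) ^ q ∂σ := lintegral_mono step2
        _ = L ^ (q-1) * ∫⁻ x, ∫⁻ zτ, Φ (x, zτ) ^ q ∂σ :=
          lintegral_const_mul' _ _ (ENNReal.rpow_ne_top_of_nonneg (by linarith) hLfin)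
    have hswapint : (∫⁻ x, ∫⁻ zτ, Φ (x, zτ) ^ q ∂σ)
        = ∫⁻ zτ, (∫⁻ x, Φ (x, zτ) ^ q) ∂σ := by
      exact lintegral_lintegral_swap (f := fun x zτ => Φ (x, zτ) ^ q) hΦq.aemeasurable
    have step4 : ∀ zτ : (Fin 3 → ℝ) × ℝ, (∫⁻ x, Φ (x, zτ) ^ q) ≤ Iw * Mv ^ q := by
      intro zτ
      have hb : ∀ᵐ x : Fin 3 → ℝ, (‖V (x - zτ.1)‖₊ : ℝ≥0∞) ≤ Mv :=
        (measurePreserving_sub_right volume zτ.1).quasiMeasurePreserving.ae hVbd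
      calc (∫⁻ x, Φ (x, zτ) ^ q)
          ≤ ∫⁻ x, (‖fderiv ℝ w (x - zτ.2 • zτ.1)‖₊ : ℝ≥0∞) ^ q * Mv ^ q := by
            refine lintegral_mono_ae ?_
            filter_upwards [hb] with x hx
            rw [hΦdef]
            simp only []
            rw [ENNReal.mul_rpow_of_nonneg _ _ hq0.le]
            exact mul_le_mul_right (ENNReal.rpow_le_rpow hx hq0.le) _
        _ = (∫⁻ x, (‖fderiv ℝ w (x - zτ.2 • zτ.1)‖₊ : ℝ≥0∞) ^ q) * Mv ^ q :=
            lintegral_mul_const' _ _ (ENNReal.rpow_ne_top_of_nonneg hq0.le hMvfin)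
        _ = Iw * Mv ^ q := by
            congr 1
            exact (measurePreserving_sub_right volume (zτ.2 • zτ.1)).lintegral_comp
              (hdw.pow_const q)
    have step5 : (∫⁻ zτ, (∫⁻ x, Φ (x, zτ) ^ q) ∂σ) ≤ Iw * Mv ^ q * L := by
      calc (∫⁻ zτ, (∫⁻ x, Φ (x, zτ) ^ q) ∂σ) ≤ ∫⁻ _zτ, Iw * Mv ^ q ∂σ :=
            lintegral_mono_ae (Filter.Eventually.of_forall step4)
        _ = Iw * Mv ^ q * L := by rw [lintegral_const, hσuniv]
    have total : (∫⁻ x, (‖(∫ y, K (x - y) * (w y * V y)) -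
          w x * ∫ y, K (x - y) * V y‖₊ : ℝ≥0∞) ^ q)
        ≤ (ENNReal.ofReal R) ^ q * ((C:ℝ≥0∞) ^ (q-1) * (Iw * Mv ^ q * (C:ℝ≥0∞))) := by
      refine le_trans step1 (mul_le_mul_right ?_ _)
      refine le_trans step3 ?_
      rw [hswapint]
      calc L ^ (q-1) * ∫⁻ zτ, (∫⁻ x, Φ (x, zτ) ^ q) ∂σ
          ≤ L ^ (q-1) * (Iw * Mv ^ q * L) := mul_le_mul_right step5 _
        _ ≤ (C:ℝ≥0∞) ^ (q-1) * (Iw * Mv ^ q * (C:ℝ≥0∞)) :=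
            mul_le_mul (ENNReal.rpow_le_rpow hLC (by linarith)) (mul_le_mul_right hLC _)
              zero_le zero_le
    rw [eLpNorm_eq_lintegral_rpow_enorm_toReal hp0 hptop, hMwq]
    have hCq : (C:ℝ≥0∞) ^ (q-1) * (C:ℝ≥0∞) = (C:ℝ≥0∞) ^ q := by
      nth_rewrite 2 [← ENNReal.rpow_one (C:ℝ≥0∞)]
      rw [← ENNReal.rpow_add _ _ hCne hCnetop]
      norm_num
    calc (∫⁻ x, (‖(∫ y, K (x - y) * (w y * V y)) -
            w x * ∫ y, K (x - y) * V y‖₊ : ℝ≥0∞) ^ q) ^ (1/q)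
        ≤ ((ENNReal.ofReal R) ^ q * ((C:ℝ≥0∞) ^ (q-1) * (Iw * Mv ^ q * (C:ℝ≥0∞)))) ^ (1/q) :=
          ENNReal.rpow_le_rpow total (by positivity)
      _ = ((ENNReal.ofReal R) ^ q * ((C:ℝ≥0∞) ^ q * (Mv ^ q * Iw))) ^ (1/q) := by
          congr 1
          rw [← hCq]
          ring
      _ = (C : ℝ≥0∞) * ENNReal.ofReal R * Iw ^ (1/q) * Mv := by
          rw [ENNReal.mul_rpow_of_nonneg _ _ (by positivity : (0:ℝ) ≤ 1/q),
            ENNReal.mul_rpow_of_nonneg _ _ (by positivity : (0:ℝ) ≤ 1/q),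
            ENNReal.mul_rpow_of_nonneg _ _ (by positivity : (0:ℝ) ≤ 1/q),
            ← ENNReal.rpow_mul, ← ENNReal.rpow_mul, ← ENNReal.rpow_mul,
            mul_one_div_cancel hq0', ENNReal.rpow_one, ENNReal.rpow_one, ENNReal.rpow_one]
          ring
end

section
/- Let P be a bounded Fourier multiplier operator on ℝ³ (e.g. a Littlewood–Paley projection) and define the modified paradifferential product {v,w} := P(v·w) − (Pv)·(Pw). Then for any bounded Lipschitz function f and functions v, w with v ∈ L^∞ and w ∈ L², one has f·{v,w} = {f v, w} + E where ‖E‖_{L²} ≤ C‖∇f‖_{L^∞}‖v‖_{L^∞}‖w‖_{L²}, provided the kernel of P is supported in the unit ball. -/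
open MeasureTheory
open scoped NNReal ENNReal

local notation "G3" => (Fin 3 → ℝ)

private lemma aem_shift {k : G3 → ℝ} (hk : AEStronglyMeasurable k volume) :
    AEStronglyMeasurable (fun p : G3 × G3 => k (p.1 - p.2))
      ((volume : Measure G3).prod volume) := by
  have h1 : AEStronglyMeasurable (fun p : G3 × G3 => k p.1)
      ((volume : Measure G3).prod volume) := hk.comp_fst
  exact h1.comp_quasiMeasurePreserving
    (measurePreserving_sub_prod (volume : Measure G3) volume).quasiMeasurePreserving

private lemma aemeas_lint {F : G3 × G3 → ℝ≥0∞}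
    (hF : AEMeasurable F ((volume : Measure G3).prod volume)) :
    AEMeasurable (fun x => ∫⁻ y, F (x, y)) (volume : Measure G3) := by
  obtain ⟨g, hg, hFg⟩ := hF
  refine ⟨fun x => ∫⁻ y, g (x, y), hg.lintegral_prod_right', ?_⟩
  filter_upwards [Measure.ae_ae_of_ae_prod hFg] with x hx
  exact lintegral_congr_ae hx

private lemma lint_shift_left {k : G3 → ℝ} (hk : AEStronglyMeasurable k volume) (x : G3) :
    ∫⁻ y, (‖k (x - y)‖₊ : ℝ≥0∞) = ∫⁻ z, (‖k z‖₊ : ℝ≥0∞) := by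
  have hmp := Measure.measurePreserving_sub_left (volume : Measure G3) x
  have h1 : ∫⁻ z, (‖k z‖₊ : ℝ≥0∞) ∂(Measure.map (fun y => x - y) volume)
      = ∫⁻ y, (‖k (x - y)‖₊ : ℝ≥0∞) := by
    refine lintegral_map' ?_ hmp.measurable.aemeasurable
    rw [hmp.map_eq]; exact hk.enorm
  rw [← h1, hmp.map_eq]

private lemma lint_shift_right {k : G3 → ℝ} (hk : AEStronglyMeasurable k volume) (y : G3) :
    ∫⁻ x, (‖k (x - y)‖₊ : ℝ≥0∞) = ∫⁻ z, (‖k z‖₊ : ℝ≥0∞) := by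
  have hmp := measurePreserving_sub_right (volume : Measure G3) y
  have h1 : ∫⁻ z, (‖k z‖₊ : ℝ≥0∞) ∂(Measure.map (fun x => x - y) volume)
      = ∫⁻ x, (‖k (x - y)‖₊ : ℝ≥0∞) := by
    refine lintegral_map' ?_ hmp.measurable.aemeasurable
    rw [hmp.map_eq]; exact hk.enorm
  rw [← h1, hmp.map_eq]

private lemma young_sq {k : G3 → ℝ} (hk : AEStronglyMeasurable k volume)
    (hNk : (∫⁻ z, (‖k z‖₊ : ℝ≥0∞)) ≠ ∞)
    {g : G3 → ℝ≥0∞} (hg : AEMeasurable g volume) :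
    ∫⁻ x, (∫⁻ y, (‖k (x - y)‖₊ : ℝ≥0∞) * g y) ^ (2:ℝ) ≤
      (∫⁻ z, (‖k z‖₊ : ℝ≥0∞)) ^ (2:ℝ) * ∫⁻ y, g y ^ (2:ℝ) := by
  set Nk := ∫⁻ z, (‖k z‖₊ : ℝ≥0∞) with hNkdef
  have hconj : (2:ℝ).HolderConjugate 2 := Real.holderConjugate_iff.mpr ⟨one_lt_two, by norm_num⟩
  have hkx : ∀ x : G3, AEMeasurable (fun y => (‖k (x - y)‖₊ : ℝ≥0∞)) volume := fun x =>
    (hk.comp_quasiMeasurePreserving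
      (Measure.measurePreserving_sub_left volume x).quasiMeasurePreserving).enorm
  have hky : ∀ y : G3, AEMeasurable (fun x => (‖k (x - y)‖₊ : ℝ≥0∞)) volume := fun y =>
    (hk.comp_quasiMeasurePreserving
      (measurePreserving_sub_right volume y).quasiMeasurePreserving).enorm
  -- inner Cauchy-Schwarz
  have hCS : ∀ x : G3, (∫⁻ y, (‖k (x - y)‖₊ : ℝ≥0∞) * g y) ^ (2:ℝ)
      ≤ Nk * ∫⁻ y, (‖k (x - y)‖₊ : ℝ≥0∞) * g y ^ (2:ℝ) := by
    intro x
    have h2 := ENNReal.lintegral_mul_le_Lp_mul_Lq volume hconj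
      ((hkx x).pow_const (1/2:ℝ)) (((hkx x).pow_const (1/2:ℝ)).mul hg)
    have heq : ∀ y : G3, ((fun y => (‖k (x - y)‖₊ : ℝ≥0∞) ^ (1/2:ℝ)) *
        fun y => (‖k (x - y)‖₊ : ℝ≥0∞) ^ (1/2:ℝ) * g y) y
        = (‖k (x - y)‖₊ : ℝ≥0∞) * g y := by
      intro y
      simp only [Pi.mul_apply, ← mul_assoc, ← ENNReal.rpow_add_of_nonneg
        (x := (‖k (x - y)‖₊ : ℝ≥0∞)) (1/2:ℝ) (1/2:ℝ) (by norm_num) (by norm_num)]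
      norm_num
    simp only [Pi.mul_apply] at h2 heq
    rw [lintegral_congr heq] at h2
    have hpow : ∀ c : ℝ≥0∞, (c ^ (1/2:ℝ)) ^ (2:ℝ) = c := by
      intro c
      rw [← ENNReal.rpow_mul]
      norm_num
    have h3 : (∫⁻ y, ((‖k (x - y)‖₊ : ℝ≥0∞) ^ (1/2:ℝ)) ^ (2:ℝ)) = Nk := by
      simp only [hpow]; exact lint_shift_left hk x
    have h4 : (∫⁻ y, ((‖k (x - y)‖₊ : ℝ≥0∞) ^ (1/2:ℝ) * g y) ^ (2:ℝ))
        = ∫⁻ y, (‖k (x - y)‖₊ : ℝ≥0∞) * g y ^ (2:ℝ) := by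
      refine lintegral_congr fun y => ?_
      rw [ENNReal.mul_rpow_of_nonneg _ _ (by norm_num : (0:ℝ) ≤ 2), hpow]
    rw [h3, h4] at h2
    calc (∫⁻ y, (‖k (x - y)‖₊ : ℝ≥0∞) * g y) ^ (2:ℝ)
        ≤ (Nk ^ (1/2:ℝ) * (∫⁻ y, (‖k (x - y)‖₊ : ℝ≥0∞) * g y ^ (2:ℝ)) ^ (1/2:ℝ)) ^ (2:ℝ) :=
          ENNReal.rpow_le_rpow h2 (by norm_num)
      _ = Nk * ∫⁻ y, (‖k (x - y)‖₊ : ℝ≥0∞) * g y ^ (2:ℝ) := by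
          rw [ENNReal.mul_rpow_of_nonneg _ _ (by norm_num : (0:ℝ) ≤ 2), hpow, hpow]
  -- outer integration and Tonelli
  have hprod : AEMeasurable (fun p : G3 × G3 => (‖k (p.1 - p.2)‖₊ : ℝ≥0∞) * g p.2 ^ (2:ℝ))
      ((volume : Measure G3).prod volume) :=
    (aem_shift hk).enorm.mul ((hg.comp_quasiMeasurePreserving
      Measure.quasiMeasurePreserving_snd).pow_const (2:ℝ))
  have hswap : ∫⁻ x, ∫⁻ y, (‖k (x - y)‖₊ : ℝ≥0∞) * g y ^ (2:ℝ)
      = ∫⁻ y, ∫⁻ x, (‖k (x - y)‖₊ : ℝ≥0∞) * g y ^ (2:ℝ) :=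
    lintegral_lintegral_swap hprod
  have hinner : ∀ y : G3, (∫⁻ x, (‖k (x - y)‖₊ : ℝ≥0∞) * g y ^ (2:ℝ)) = Nk * g y ^ (2:ℝ) := by
    intro y
    rw [lintegral_mul_const'' _ (hky y), lint_shift_right hk y]
  calc ∫⁻ x, (∫⁻ y, (‖k (x - y)‖₊ : ℝ≥0∞) * g y) ^ (2:ℝ)
      ≤ ∫⁻ x, Nk * ∫⁻ y, (‖k (x - y)‖₊ : ℝ≥0∞) * g y ^ (2:ℝ) := lintegral_mono hCS
    _ = Nk * ∫⁻ x, ∫⁻ y, (‖k (x - y)‖₊ : ℝ≥0∞) * g y ^ (2:ℝ) := lintegral_const_mul' _ _ hNk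
    _ = Nk * ∫⁻ y, Nk * g y ^ (2:ℝ) := by rw [hswap]; congr 1; exact lintegral_congr hinner
    _ = Nk * (Nk * ∫⁻ y, g y ^ (2:ℝ)) := by rw [lintegral_const_mul' _ _ hNk]
    _ = Nk ^ (2:ℝ) * ∫⁻ y, g y ^ (2:ℝ) := by
        rw [show (2:ℝ) = ((2:ℕ):ℝ) by norm_num, ENNReal.rpow_natCast]; ring


private lemma eLpNorm_two_le {F : G3 → ℝ} {G : G3 → ℝ≥0∞}
    (h : ∀ᵐ x ∂(volume : Measure G3), (‖F x‖₊ : ℝ≥0∞) ≤ G x) :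
    eLpNorm F 2 volume ≤ (∫⁻ x, G x ^ (2:ℝ)) ^ (1/2:ℝ) := by
  rw [eLpNorm_eq_lintegral_rpow_enorm_toReal (by norm_num) (by norm_num)]
  simp only [ENNReal.toReal_ofNat]
  refine ENNReal.rpow_le_rpow ?_ (by norm_num)
  refine lintegral_mono_ae ?_
  filter_upwards [h] with x hx
  exact ENNReal.rpow_le_rpow hx (by norm_num)


/-- Leibniz-type property of the modified paradifferential product
`{v,w} = P(vw) − (Pv)(Pw)` for a convolution operator `P` with integrable kernel
supported in the unit ball: `f·{v,w} = {fv, w} + E` with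
`‖E‖_{L²} ≤ C‖∇f‖_{L^∞}‖v‖_{L^∞}‖w‖_{L²}`. -/
theorem paradifferential_product_leibniz
    (k : (Fin 3 → ℝ) → ℝ) (hk : Integrable k) (hsupp : ∀ x, k x ≠ 0 → ‖x‖ ≤ 1) :
    ∃ C : ℝ≥0, 0 < C ∧ ∀ (f v w : (Fin 3 → ℝ) → ℝ) (K : ℝ≥0),
      LipschitzWith K f → (∃ M, ∀ x, |f x| ≤ M) →
      MemLp v ∞ volume → MemLp w 2 volume →
      eLpNorm
        (fun x =>
          f x * ((∫ y, k (x - y) * (v y * w y)) -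
            (∫ y, k (x - y) * v y) * (∫ y, k (x - y) * w y)) -
          ((∫ y, k (x - y) * (f y * v y * w y)) -
            (∫ y, k (x - y) * (f y * v y)) * (∫ y, k (x - y) * w y)))
        2 volume
      ≤ (C : ℝ≥0∞) * (K : ℝ≥0∞) * eLpNorm v ∞ volume * eLpNorm w 2 volume := by
  set Nk : ℝ≥0∞ := ∫⁻ z, (‖k z‖₊ : ℝ≥0∞) with hNkdef
  have hNk_ne : Nk ≠ ∞ := ne_of_lt hk.2
  refine ⟨((1 + Nk) * Nk).toNNReal + 1, by positivity, ?_⟩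
  rintro f v w K hLip ⟨M, hM⟩ hv hw
  set B : ℝ≥0∞ := eLpNorm v ∞ volume with hBdef
  set W : ℝ≥0∞ := eLpNorm w 2 volume with hWdef
  have hB_ne : B ≠ ∞ := hv.2.ne
  have hW_ne : W ≠ ∞ := hw.2.ne
  have hvB : ∀ᵐ y ∂(volume : Measure (Fin 3 → ℝ)), (‖v y‖₊ : ℝ≥0∞) ≤ B := by
    have h := ae_le_eLpNormEssSup (f := v) (μ := (volume : Measure (Fin 3 → ℝ)))
    filter_upwards [h] with y hy
    rwa [hBdef, eLpNorm_exponent_top]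
  have hfM : ∀ y, (‖f y‖₊ : ℝ≥0∞) ≤ (‖M‖₊ : ℝ≥0∞) := by
    intro y
    have : ‖f y‖ ≤ ‖M‖ := by
      rw [Real.norm_eq_abs, Real.norm_eq_abs]
      exact (hM y).trans (le_abs_self M)
    exact_mod_cast this
  -- kernel measurability for fixed x
  have hkxm : ∀ x : Fin 3 → ℝ, AEStronglyMeasurable (fun y => k (x - y)) volume := fun x =>
    hk.1.comp_quasiMeasurePreserving
      (Measure.measurePreserving_sub_left volume x).quasiMeasurePreserving
  -- the majorant H
  set H : (Fin 3 → ℝ) → ℝ≥0∞ := fun x => ∫⁻ y, (‖k (x - y)‖₊ : ℝ≥0∞) * ‖w y‖₊ with hHdef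
  have hH_meas : AEMeasurable H volume := by
    exact aemeas_lint ((aem_shift hk.1).enorm.mul (hw.1.comp_snd.enorm))
  set W2 : ℝ≥0∞ := ∫⁻ y, (‖w y‖₊ : ℝ≥0∞) ^ (2:ℝ) with hW2def
  have hpow : ∀ c : ℝ≥0∞, (c ^ (1/2:ℝ)) ^ (2:ℝ) = c := by
    intro c; rw [← ENNReal.rpow_mul]; norm_num
  have hpow2 : ∀ c : ℝ≥0∞, (c ^ (2:ℝ)) ^ (1/2:ℝ) = c := by
    intro c; rw [← ENNReal.rpow_mul]; norm_num
  have hWeq : W = W2 ^ (1/2:ℝ) := by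
    rw [hWdef, eLpNorm_eq_lintegral_rpow_enorm_toReal (by norm_num) (by norm_num), hW2def]
    norm_num
    rfl
  have hW2_ne : W2 ≠ ∞ := by
    have : W2 = W ^ (2:ℝ) := by rw [hWeq, hpow]
    rw [this]
    exact ENNReal.rpow_ne_top_of_nonneg (by norm_num) hW_ne
  have hHsq : ∫⁻ x, H x ^ (2:ℝ) ≤ Nk ^ (2:ℝ) * W2 :=
    young_sq hk.1 hNk_ne hw.1.enorm
  have hHfin : ∀ᵐ x ∂(volume : Measure (Fin 3 → ℝ)), H x < ∞ := by
    have hfin : ∫⁻ x, H x ^ (2:ℝ) ≠ ∞ :=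
      (lt_of_le_of_lt hHsq (ENNReal.mul_lt_top
        (ENNReal.rpow_ne_top_of_nonneg (by norm_num) hNk_ne).lt_top hW2_ne.lt_top)).ne
    filter_upwards [ae_lt_top' (hH_meas.pow_const (2:ℝ)) hfin] with x hx
    exact (ENNReal.rpow_lt_top_iff_of_pos (by norm_num : (0:ℝ) < 2)).mp hx
  -- Lipschitz/support bound on the commutator kernel
  have hfk : ∀ x y : Fin 3 → ℝ,
      (‖f x - f y‖₊ : ℝ≥0∞) * ‖k (x - y)‖₊ ≤ (K : ℝ≥0∞) * ‖k (x - y)‖₊ := by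
    intro x y
    by_cases h : k (x - y) = 0
    · simp [h]
    · have h1 : edist x y ≤ 1 := by
        rw [edist_eq_enorm_sub]
        have h2 : ‖x - y‖₊ ≤ 1 := by
          rw [← NNReal.coe_le_coe, coe_nnnorm]
          exact hsupp _ h
        rw [enorm_eq_nnnorm]
        exact_mod_cast h2
      have h2 : (‖f x - f y‖₊ : ℝ≥0∞) ≤ K := by
        have h3 := hLip x y
        rw [edist_eq_enorm_sub] at h3
        calc (‖f x - f y‖₊ : ℝ≥0∞) ≤ K * edist x y := h3
          _ ≤ K * 1 := mul_le_mul_right h1 _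
          _ = K := mul_one _
      exact mul_le_mul_left h2 _
  -- bound on Pw
  have hPw_le : ∀ x : Fin 3 → ℝ, (‖∫ y, k (x - y) * w y‖₊ : ℝ≥0∞) ≤ H x := by
    intro x
    refine (enorm_integral_le_lintegral_enorm _).trans (le_of_eq ?_)
    refine lintegral_congr fun y => ?_
    exact enorm_mul (a := k (x - y)) (b := w y)
  -- integrability, a.e. in x, of the L²-type integrands
  have ha : ∀ᵐ x ∂(volume : Measure (Fin 3 → ℝ)),
      Integrable (fun y => k (x - y) * (v y * w y)) volume ∧
      Integrable (fun y => k (x - y) * (f y * v y * w y)) volume := by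
    filter_upwards [hHfin] with x hx
    constructor
    · refine ⟨(hkxm x).mul (hv.1.mul hw.1), ?_⟩
      show (∫⁻ y, (‖k (x - y) * (v y * w y)‖₊ : ℝ≥0∞)) < ∞
      have hb : ∀ᵐ y ∂(volume : Measure (Fin 3 → ℝ)),
          (‖k (x - y) * (v y * w y)‖₊ : ℝ≥0∞) ≤ B * ((‖k (x - y)‖₊ : ℝ≥0∞) * ‖w y‖₊) := by
        filter_upwards [hvB] with y hy
        rw [nnnorm_mul, nnnorm_mul, ENNReal.coe_mul, ENNReal.coe_mul]
        calc (‖k (x - y)‖₊ : ℝ≥0∞) * ((‖v y‖₊ : ℝ≥0∞) * ‖w y‖₊)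
            ≤ (‖k (x - y)‖₊ : ℝ≥0∞) * (B * ‖w y‖₊) :=
              mul_le_mul_right (mul_le_mul_left hy _) _
          _ = B * ((‖k (x - y)‖₊ : ℝ≥0∞) * ‖w y‖₊) := by ring
      calc (∫⁻ y, (‖k (x - y) * (v y * w y)‖₊ : ℝ≥0∞))
          ≤ ∫⁻ y, B * ((‖k (x - y)‖₊ : ℝ≥0∞) * ‖w y‖₊) := lintegral_mono_ae hb
        _ = B * H x := lintegral_const_mul' _ _ hB_ne
        _ < ∞ := ENNReal.mul_lt_top hB_ne.lt_top hx
    · refine ⟨(hkxm x).mul ((hLip.continuous.aestronglyMeasurable.mul hv.1).mul hw.1), ?_⟩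
      show (∫⁻ y, (‖k (x - y) * (f y * v y * w y)‖₊ : ℝ≥0∞)) < ∞
      have hb : ∀ᵐ y ∂(volume : Measure (Fin 3 → ℝ)),
          (‖k (x - y) * (f y * v y * w y)‖₊ : ℝ≥0∞)
            ≤ (‖M‖₊ * B) * ((‖k (x - y)‖₊ : ℝ≥0∞) * ‖w y‖₊) := by
        filter_upwards [hvB] with y hy
        rw [nnnorm_mul, nnnorm_mul, nnnorm_mul, ENNReal.coe_mul, ENNReal.coe_mul,
          ENNReal.coe_mul]
        calc (‖k (x - y)‖₊ : ℝ≥0∞) * ((‖f y‖₊ : ℝ≥0∞) * ‖v y‖₊ * ‖w y‖₊)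
            ≤ (‖k (x - y)‖₊ : ℝ≥0∞) * ((‖M‖₊ : ℝ≥0∞) * B * ‖w y‖₊) :=
              mul_le_mul_right (mul_le_mul_left (mul_le_mul' (hfM y) hy) _) _
          _ = (‖M‖₊ * B) * ((‖k (x - y)‖₊ : ℝ≥0∞) * ‖w y‖₊) := by ring
      calc (∫⁻ y, (‖k (x - y) * (f y * v y * w y)‖₊ : ℝ≥0∞))
          ≤ ∫⁻ y, (‖M‖₊ * B) * ((‖k (x - y)‖₊ : ℝ≥0∞) * ‖w y‖₊) := lintegral_mono_ae hb
        _ = (‖M‖₊ * B) * H x := lintegral_const_mul' _ _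
            (ENNReal.mul_ne_top ENNReal.coe_ne_top hB_ne)
        _ < ∞ := ENNReal.mul_lt_top
            (ENNReal.mul_ne_top ENNReal.coe_ne_top hB_ne).lt_top hx
  -- first commutator piece, pointwise a.e. bound
  have hT1 : ∀ᵐ x ∂(volume : Measure (Fin 3 → ℝ)),
      (‖f x * (∫ y, k (x - y) * (v y * w y)) - ∫ y, k (x - y) * (f y * v y * w y)‖₊ : ℝ≥0∞)
        ≤ ((K : ℝ≥0∞) * B) * H x := by
    filter_upwards [ha] with x hx
    obtain ⟨h1, h2⟩ := hx
    have hid : f x * (∫ y, k (x - y) * (v y * w y)) - ∫ y, k (x - y) * (f y * v y * w y)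
        = ∫ y, k (x - y) * ((f x - f y) * (v y * w y)) := by
      rw [← integral_const_mul, ← integral_sub (h1.const_mul (f x)) h2]
      exact integral_congr_ae (Filter.Eventually.of_forall fun y => by ring)
    rw [hid]
    refine (enorm_integral_le_lintegral_enorm _).trans ?_
    have hb : ∀ᵐ y ∂(volume : Measure (Fin 3 → ℝ)),
        (‖k (x - y) * ((f x - f y) * (v y * w y))‖₊ : ℝ≥0∞)
          ≤ ((K : ℝ≥0∞) * B) * ((‖k (x - y)‖₊ : ℝ≥0∞) * ‖w y‖₊) := by
      filter_upwards [hvB] with y hy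
      rw [nnnorm_mul, nnnorm_mul, nnnorm_mul, ENNReal.coe_mul, ENNReal.coe_mul, ENNReal.coe_mul]
      calc (‖k (x - y)‖₊ : ℝ≥0∞) * ((‖f x - f y‖₊ : ℝ≥0∞) * ((‖v y‖₊ : ℝ≥0∞) * ‖w y‖₊))
          = ((‖f x - f y‖₊ : ℝ≥0∞) * ‖k (x - y)‖₊) * ((‖v y‖₊ : ℝ≥0∞) * ‖w y‖₊) := by ring
        _ ≤ ((K : ℝ≥0∞) * ‖k (x - y)‖₊) * (B * ‖w y‖₊) :=
            mul_le_mul' (hfk x y) (mul_le_mul_left hy _)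
        _ = ((K : ℝ≥0∞) * B) * ((‖k (x - y)‖₊ : ℝ≥0∞) * ‖w y‖₊) := by ring
    calc (∫⁻ y, (‖k (x - y) * ((f x - f y) * (v y * w y))‖₊ : ℝ≥0∞))
        ≤ ∫⁻ y, ((K : ℝ≥0∞) * B) * ((‖k (x - y)‖₊ : ℝ≥0∞) * ‖w y‖₊) := lintegral_mono_ae hb
      _ = ((K : ℝ≥0∞) * B) * H x := lintegral_const_mul' _ _
          (ENNReal.mul_ne_top ENNReal.coe_ne_top hB_ne)
  -- integrability for the L^∞ pieces, for every x
  have hIv : ∀ x : Fin 3 → ℝ, Integrable (fun y => k (x - y) * v y) volume := by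
    intro x
    refine ⟨(hkxm x).mul hv.1, ?_⟩
    show (∫⁻ y, (‖k (x - y) * v y‖₊ : ℝ≥0∞)) < ∞
    have hb : ∀ᵐ y ∂(volume : Measure (Fin 3 → ℝ)),
        (‖k (x - y) * v y‖₊ : ℝ≥0∞) ≤ B * ‖k (x - y)‖₊ := by
      filter_upwards [hvB] with y hy
      rw [nnnorm_mul, ENNReal.coe_mul]
      calc (‖k (x - y)‖₊ : ℝ≥0∞) * ‖v y‖₊ ≤ (‖k (x - y)‖₊ : ℝ≥0∞) * B := mul_le_mul_right hy _
        _ = B * ‖k (x - y)‖₊ := mul_comm _ _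
    calc (∫⁻ y, (‖k (x - y) * v y‖₊ : ℝ≥0∞)) ≤ ∫⁻ y, B * ‖k (x - y)‖₊ := lintegral_mono_ae hb
      _ = B * Nk := by rw [lintegral_const_mul' _ _ hB_ne, lint_shift_left hk.1 x]
      _ < ∞ := ENNReal.mul_lt_top hB_ne.lt_top hNk_ne.lt_top
  have hIfv : ∀ x : Fin 3 → ℝ, Integrable (fun y => k (x - y) * (f y * v y)) volume := by
    intro x
    refine ⟨(hkxm x).mul (hLip.continuous.aestronglyMeasurable.mul hv.1), ?_⟩
    show (∫⁻ y, (‖k (x - y) * (f y * v y)‖₊ : ℝ≥0∞)) < ∞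
    have hb : ∀ᵐ y ∂(volume : Measure (Fin 3 → ℝ)),
        (‖k (x - y) * (f y * v y)‖₊ : ℝ≥0∞) ≤ ((‖M‖₊ : ℝ≥0∞) * B) * ‖k (x - y)‖₊ := by
      filter_upwards [hvB] with y hy
      rw [nnnorm_mul, nnnorm_mul, ENNReal.coe_mul, ENNReal.coe_mul]
      calc (‖k (x - y)‖₊ : ℝ≥0∞) * ((‖f y‖₊ : ℝ≥0∞) * ‖v y‖₊)
          ≤ (‖k (x - y)‖₊ : ℝ≥0∞) * ((‖M‖₊ : ℝ≥0∞) * B) :=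
            mul_le_mul_right (mul_le_mul' (hfM y) hy) _
        _ = ((‖M‖₊ : ℝ≥0∞) * B) * ‖k (x - y)‖₊ := mul_comm _ _
    calc (∫⁻ y, (‖k (x - y) * (f y * v y)‖₊ : ℝ≥0∞))
        ≤ ∫⁻ y, ((‖M‖₊ : ℝ≥0∞) * B) * ‖k (x - y)‖₊ := lintegral_mono_ae hb
      _ = ((‖M‖₊ : ℝ≥0∞) * B) * Nk := by
          rw [lintegral_const_mul' _ _ (ENNReal.mul_ne_top ENNReal.coe_ne_top hB_ne),
            lint_shift_left hk.1 x]
      _ < ∞ := ENNReal.mul_lt_top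
          (ENNReal.mul_ne_top ENNReal.coe_ne_top hB_ne).lt_top hNk_ne.lt_top
  -- second commutator piece, uniform bound
  have hT2 : ∀ x : Fin 3 → ℝ,
      (‖f x * (∫ y, k (x - y) * v y) - ∫ y, k (x - y) * (f y * v y)‖₊ : ℝ≥0∞)
        ≤ (K : ℝ≥0∞) * B * Nk := by
    intro x
    have hid : f x * (∫ y, k (x - y) * v y) - ∫ y, k (x - y) * (f y * v y)
        = ∫ y, k (x - y) * ((f x - f y) * v y) := by
      rw [← integral_const_mul, ← integral_sub ((hIv x).const_mul (f x)) (hIfv x)]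
      exact integral_congr_ae (Filter.Eventually.of_forall fun y => by ring)
    rw [hid]
    refine (enorm_integral_le_lintegral_enorm _).trans ?_
    have hb : ∀ᵐ y ∂(volume : Measure (Fin 3 → ℝ)),
        (‖k (x - y) * ((f x - f y) * v y)‖₊ : ℝ≥0∞)
          ≤ ((K : ℝ≥0∞) * B) * ‖k (x - y)‖₊ := by
      filter_upwards [hvB] with y hy
      rw [nnnorm_mul, nnnorm_mul, ENNReal.coe_mul, ENNReal.coe_mul]
      calc (‖k (x - y)‖₊ : ℝ≥0∞) * ((‖f x - f y‖₊ : ℝ≥0∞) * ‖v y‖₊)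
          = ((‖f x - f y‖₊ : ℝ≥0∞) * ‖k (x - y)‖₊) * ‖v y‖₊ := by ring
        _ ≤ ((K : ℝ≥0∞) * ‖k (x - y)‖₊) * B := mul_le_mul' (hfk x y) hy
        _ = ((K : ℝ≥0∞) * B) * ‖k (x - y)‖₊ := by ring
    calc (∫⁻ y, (‖k (x - y) * ((f x - f y) * v y)‖₊ : ℝ≥0∞))
        ≤ ∫⁻ y, ((K : ℝ≥0∞) * B) * ‖k (x - y)‖₊ := lintegral_mono_ae hb
      _ = (K : ℝ≥0∞) * B * Nk := by
          rw [lintegral_const_mul' _ _ (ENNReal.mul_ne_top ENNReal.coe_ne_top hB_ne),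
            lint_shift_left hk.1 x]
  -- combined pointwise bound
  set c : ℝ≥0∞ := (K : ℝ≥0∞) * B * (1 + Nk) with hcdef
  have hc_ne : c ≠ ∞ := ENNReal.mul_ne_top (ENNReal.mul_ne_top ENNReal.coe_ne_top hB_ne)
    (ENNReal.add_ne_top.mpr ⟨ENNReal.one_ne_top, hNk_ne⟩)
  have hEptw : ∀ᵐ x ∂(volume : Measure (Fin 3 → ℝ)),
      (‖f x * ((∫ y, k (x - y) * (v y * w y)) -
          (∫ y, k (x - y) * v y) * (∫ y, k (x - y) * w y)) -
        ((∫ y, k (x - y) * (f y * v y * w y)) -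
          (∫ y, k (x - y) * (f y * v y)) * (∫ y, k (x - y) * w y))‖₊ : ℝ≥0∞)
        ≤ c * H x := by
    filter_upwards [hT1] with x h1
    have hsplit : f x * ((∫ y, k (x - y) * (v y * w y)) -
          (∫ y, k (x - y) * v y) * (∫ y, k (x - y) * w y)) -
        ((∫ y, k (x - y) * (f y * v y * w y)) -
          (∫ y, k (x - y) * (f y * v y)) * (∫ y, k (x - y) * w y))
        = (f x * (∫ y, k (x - y) * (v y * w y)) - ∫ y, k (x - y) * (f y * v y * w y)) -
          (f x * (∫ y, k (x - y) * v y) - ∫ y, k (x - y) * (f y * v y)) *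
            (∫ y, k (x - y) * w y) := by ring
    rw [hsplit]
    have step1 : (‖(f x * (∫ y, k (x - y) * (v y * w y)) - ∫ y, k (x - y) * (f y * v y * w y)) -
          (f x * (∫ y, k (x - y) * v y) - ∫ y, k (x - y) * (f y * v y)) *
            (∫ y, k (x - y) * w y)‖₊ : ℝ≥0∞)
        ≤ (‖f x * (∫ y, k (x - y) * (v y * w y)) - ∫ y, k (x - y) * (f y * v y * w y)‖₊ : ℝ≥0∞)
          + (‖f x * (∫ y, k (x - y) * v y) - ∫ y, k (x - y) * (f y * v y)‖₊ : ℝ≥0∞)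
            * (‖∫ y, k (x - y) * w y‖₊ : ℝ≥0∞) := by
      rw [← ENNReal.coe_mul, ← ENNReal.coe_add, ENNReal.coe_le_coe, ← nnnorm_mul]
      exact nnnorm_sub_le _ _
    refine step1.trans ?_
    calc (‖f x * (∫ y, k (x - y) * (v y * w y)) - ∫ y, k (x - y) * (f y * v y * w y)‖₊ : ℝ≥0∞)
          + (‖f x * (∫ y, k (x - y) * v y) - ∫ y, k (x - y) * (f y * v y)‖₊ : ℝ≥0∞)
            * (‖∫ y, k (x - y) * w y‖₊ : ℝ≥0∞)
        ≤ ((K : ℝ≥0∞) * B) * H x + ((K : ℝ≥0∞) * B * Nk) * H x :=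
          add_le_add h1 (mul_le_mul' (hT2 x) (hPw_le x))
      _ = c * H x := by rw [hcdef]; ring
  -- conclude
  have hcsq_ne : c ^ (2:ℝ) ≠ ∞ := ENNReal.rpow_ne_top_of_nonneg (by norm_num) hc_ne
  refine le_trans (eLpNorm_two_le hEptw) ?_
  have hCge : ((1 + Nk) * Nk : ℝ≥0∞) ≤ ((((1 + Nk) * Nk).toNNReal + 1 : ℝ≥0) : ℝ≥0∞) := by
    rw [ENNReal.coe_add, ENNReal.coe_toNNReal
      (ENNReal.mul_ne_top (ENNReal.add_ne_top.mpr ⟨ENNReal.one_ne_top, hNk_ne⟩) hNk_ne),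
      ENNReal.coe_one]
    exact le_self_add
  calc (∫⁻ x, (c * H x) ^ (2:ℝ)) ^ (1/2:ℝ)
      = (c ^ (2:ℝ) * ∫⁻ x, H x ^ (2:ℝ)) ^ (1/2:ℝ) := by
        rw [← lintegral_const_mul' _ _ hcsq_ne]
        congr 1
        exact lintegral_congr fun x => ENNReal.mul_rpow_of_nonneg _ _ (by norm_num)
    _ ≤ (c ^ (2:ℝ) * (Nk ^ (2:ℝ) * W2)) ^ (1/2:ℝ) :=
        ENNReal.rpow_le_rpow (mul_le_mul_right hHsq _) (by norm_num)
    _ = c * (Nk * W) := by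
        rw [ENNReal.mul_rpow_of_nonneg _ _ (by norm_num : (0:ℝ) ≤ 1/2),
          ENNReal.mul_rpow_of_nonneg _ _ (by norm_num : (0:ℝ) ≤ 1/2), hpow2, hpow2, hWeq]
    _ = ((1 + Nk) * Nk) * ((K : ℝ≥0∞) * B * W) := by rw [hcdef]; ring
    _ ≤ ((((1 + Nk) * Nk).toNNReal + 1 : ℝ≥0) : ℝ≥0∞) * ((K : ℝ≥0∞) * B * W) :=
        mul_le_mul_left hCge _
    _ = ((((1 + Nk) * Nk).toNNReal + 1 : ℝ≥0) : ℝ≥0∞) * (K : ℝ≥0∞) * B * W := by ring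
end

section
/- Let P be convolution with an L¹ kernel on ℝ³ supported in the unit ball and define {v,w}' := [v,P]w = v·Pw − P(vw). If v is Lipschitz with ∇v ∈ L^∞ and w ∈ L², and f is bounded Lipschitz, then f·{v,w}' = [v,P](f w) + E with ‖E‖_{L²} ≤ C‖∇f‖_{L^∞}‖∇v‖_{L^∞}‖w‖_{L²}. -/
open MeasureTheory
open scoped NNReal ENNReal

private lemma dc_conj22 : Real.HolderConjugate 2 2 := Real.HolderConjugate.two_two

/-- Young's inequality `‖ |k| ∗ |w| ‖₂ ≤ ‖k‖₁ ‖w‖₂`, in squared `lintegral` form. -/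
private lemma dc_young (k w : (Fin 3 → ℝ) → ℝ) (hk : Measurable k) (hw : Measurable w) :
    ∫⁻ x, (∫⁻ y, (‖k (x - y)‖₊ : ℝ≥0∞) * ‖w y‖₊) ^ (2 : ℝ) ≤
      (∫⁻ t, (‖k t‖₊ : ℝ≥0∞)) ^ (2 : ℝ) * ∫⁻ y, (‖w y‖₊ : ℝ≥0∞) ^ (2 : ℝ) := by
  set I := ∫⁻ t, (‖k t‖₊ : ℝ≥0∞) with hIdef
  have hmkprod : Measurable fun p : (Fin 3 → ℝ) × (Fin 3 → ℝ) => (‖k (p.1 - p.2)‖₊ : ℝ≥0∞) :=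
    (hk.comp (measurable_fst.sub measurable_snd)).nnnorm.coe_nnreal_ennreal
  have hmw : Measurable fun y => (‖w y‖₊ : ℝ≥0∞) := hw.nnnorm.coe_nnreal_ennreal
  have hsubL : ∀ x : Fin 3 → ℝ, ∫⁻ y, (‖k (x - y)‖₊ : ℝ≥0∞) = I := fun x =>
    (Measure.measurePreserving_sub_left volume x).lintegral_comp hk.nnnorm.coe_nnreal_ennreal
  have hsubR : ∀ y : Fin 3 → ℝ, ∫⁻ x, (‖k (x - y)‖₊ : ℝ≥0∞) = I := fun y =>
    (measurePreserving_sub_right volume y).lintegral_comp hk.nnnorm.coe_nnreal_ennreal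
  have cs : ∀ x, (∫⁻ y, (‖k (x - y)‖₊ : ℝ≥0∞) * ‖w y‖₊) ^ (2 : ℝ) ≤
      I * ∫⁻ y, (‖k (x - y)‖₊ : ℝ≥0∞) * (‖w y‖₊ : ℝ≥0∞) ^ (2 : ℝ) := by
    intro x
    have hmk : Measurable fun y => (‖k (x - y)‖₊ : ℝ≥0∞) :=
      (hk.comp (measurable_const.sub measurable_id)).nnnorm.coe_nnreal_ennreal
    have h := ENNReal.lintegral_mul_le_Lp_mul_Lq (volume) dc_conj22
      (f := fun y => ((‖k (x - y)‖₊ : ℝ≥0∞)) ^ ((1:ℝ)/2))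
      (g := fun y => ((‖k (x - y)‖₊ : ℝ≥0∞)) ^ ((1:ℝ)/2) * ‖w y‖₊)
      ((hmk.pow_const _).aemeasurable) (((hmk.pow_const _).mul hmw).aemeasurable)
    have e1 : ∀ y, ((‖k (x - y)‖₊ : ℝ≥0∞)) ^ ((1:ℝ)/2) *
        (((‖k (x - y)‖₊ : ℝ≥0∞)) ^ ((1:ℝ)/2) * ‖w y‖₊) = (‖k (x - y)‖₊ : ℝ≥0∞) * ‖w y‖₊ := by
      intro y
      rw [← mul_assoc, ← ENNReal.rpow_add_of_nonneg _ _ (by norm_num) (by norm_num)]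
      norm_num
    have e2 : ∀ y, (((‖k (x - y)‖₊ : ℝ≥0∞)) ^ ((1:ℝ)/2)) ^ (2:ℝ) = (‖k (x - y)‖₊ : ℝ≥0∞) := by
      intro y
      rw [← ENNReal.rpow_mul]
      norm_num
    have e3 : ∀ y, (((‖k (x - y)‖₊ : ℝ≥0∞)) ^ ((1:ℝ)/2) * (‖w y‖₊ : ℝ≥0∞)) ^ (2:ℝ) =
        (‖k (x - y)‖₊ : ℝ≥0∞) * (‖w y‖₊ : ℝ≥0∞) ^ (2:ℝ) := by
      intro y
      rw [ENNReal.mul_rpow_of_nonneg _ _ (by norm_num), ← ENNReal.rpow_mul]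
      norm_num
    simp only [Pi.mul_apply, e1, e2, e3] at h
    calc (∫⁻ y, (‖k (x - y)‖₊ : ℝ≥0∞) * ‖w y‖₊) ^ (2:ℝ)
        ≤ ((∫⁻ y, (‖k (x - y)‖₊ : ℝ≥0∞)) ^ ((1:ℝ)/2) *
            (∫⁻ y, (‖k (x - y)‖₊ : ℝ≥0∞) * (‖w y‖₊ : ℝ≥0∞) ^ (2:ℝ)) ^ ((1:ℝ)/2)) ^ (2:ℝ) :=
          ENNReal.rpow_le_rpow h (by norm_num)
      _ = I * ∫⁻ y, (‖k (x - y)‖₊ : ℝ≥0∞) * (‖w y‖₊ : ℝ≥0∞) ^ (2:ℝ) := by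
          rw [ENNReal.mul_rpow_of_nonneg _ _ (by norm_num), ← ENNReal.rpow_mul,
            ← ENNReal.rpow_mul, hsubL x]
          norm_num
  have hinner : Measurable fun x => ∫⁻ y, (‖k (x - y)‖₊ : ℝ≥0∞) * (‖w y‖₊ : ℝ≥0∞) ^ (2:ℝ) :=
    Measurable.lintegral_prod_right' (hmkprod.mul ((hmw.comp measurable_snd).pow_const _))
  calc ∫⁻ x, (∫⁻ y, (‖k (x - y)‖₊ : ℝ≥0∞) * ‖w y‖₊) ^ (2 : ℝ)
      ≤ ∫⁻ x, I * ∫⁻ y, (‖k (x - y)‖₊ : ℝ≥0∞) * (‖w y‖₊ : ℝ≥0∞) ^ (2:ℝ) :=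
        lintegral_mono cs
    _ = I * ∫⁻ x, ∫⁻ y, (‖k (x - y)‖₊ : ℝ≥0∞) * (‖w y‖₊ : ℝ≥0∞) ^ (2:ℝ) :=
        lintegral_const_mul I hinner
    _ = I * ∫⁻ y, ∫⁻ x, (‖k (x - y)‖₊ : ℝ≥0∞) * (‖w y‖₊ : ℝ≥0∞) ^ (2:ℝ) := by
        rw [lintegral_lintegral_swap
          ((hmkprod.mul ((hmw.comp measurable_snd).pow_const _)).aemeasurable)]
    _ = I * ∫⁻ y, I * (‖w y‖₊ : ℝ≥0∞) ^ (2:ℝ) := by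
        congr 1
        refine lintegral_congr fun y => ?_
        have hm : Measurable fun x : Fin 3 → ℝ => (‖k (x - y)‖₊ : ℝ≥0∞) :=
          (hk.comp (measurable_id.sub measurable_const)).nnnorm.coe_nnreal_ennreal
        rw [lintegral_mul_const _ hm, hsubR y]
    _ = I ^ (2:ℝ) * ∫⁻ y, (‖w y‖₊ : ℝ≥0∞) ^ (2:ℝ) := by
        rw [lintegral_const_mul I (hmw.pow_const _), ← mul_assoc]
        congr 1
        rw [show (2:ℝ) = ((2:ℕ):ℝ) by norm_num, ENNReal.rpow_natCast]
        ring

/-- For `P` a convolution operator with integrable kernel supported in the unit ball and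
`{v,w}' = [v,P]w = v·Pw − P(vw)`, if `v` and `f` are Lipschitz (with constants `Kv`, `Kf`
playing the role of `‖∇v‖_{L^∞}`, `‖∇f‖_{L^∞}`) and `w ∈ L²`, then
`f·{v,w}' = [v,P](fw) + E` with `‖E‖_{L²} ≤ C·Kf·Kv·‖w‖_{L²}`. -/
theorem double_commutator_paraproduct
    (k : (Fin 3 → ℝ) → ℝ) (hk : Integrable k) (hsupp : ∀ x, k x ≠ 0 → ‖x‖ ≤ 1) :
    ∃ C : ℝ≥0, 0 < C ∧ ∀ (f v w : (Fin 3 → ℝ) → ℝ) (Kf Kv : ℝ≥0),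
      LipschitzWith Kf f → (∃ M, ∀ x, |f x| ≤ M) → LipschitzWith Kv v →
      MemLp w 2 volume →
      eLpNorm
        (fun x =>
          f x * (v x * (∫ y, k (x - y) * w y) - (∫ y, k (x - y) * (v y * w y))) -
          (v x * (∫ y, k (x - y) * (f y * w y)) -
            (∫ y, k (x - y) * (v y * (f y * w y)))))
        2 volume
      ≤ (C : ℝ≥0∞) * (Kf : ℝ≥0∞) * (Kv : ℝ≥0∞) * eLpNorm w 2 volume := by
  classical
  -- measurable representative of k with pointwise support condition
  obtain ⟨k₁, hk₁sm, hkk₁⟩ := hk.1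
  set k₀ : (Fin 3 → ℝ) → ℝ := fun t => if ‖t‖ ≤ 1 then k₁ t else 0 with hk₀def
  have hk₀meas : Measurable k₀ :=
    Measurable.ite (measurableSet_le measurable_norm measurable_const)
      hk₁sm.measurable measurable_const
  have hk₀ae : k =ᵐ[volume] k₀ := by
    filter_upwards [hkk₁] with t ht
    by_cases h : ‖t‖ ≤ 1
    · simp [hk₀def, h, ht]
    · have hz : k t = 0 := by
        by_contra hc; exact h (hsupp t hc)
      simp [hk₀def, h, hz]
  have hsupp₀ : ∀ t, k₀ t ≠ 0 → ‖t‖ ≤ 1 := by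
    intro t h
    by_contra hc
    exact h (by simp [hk₀def, hc])
  have hk₀int : Integrable k₀ := hk.congr hk₀ae
  set I := ∫⁻ t, (‖k₀ t‖₊ : ℝ≥0∞) with hIdef
  have hIfin : I ≠ ∞ := hk₀int.2.ne
  refine ⟨I.toNNReal + 1, by positivity, ?_⟩
  intro f v w Kf Kv hf hfb hv hw
  have hCI : I ≤ ((I.toNNReal + 1 : ℝ≥0) : ℝ≥0∞) := by
    push_cast
    rw [ENNReal.coe_toNNReal hIfin]
    exact le_self_add
  -- measurable representative of w
  obtain ⟨w₀, hw₀sm, hww₀⟩ := hw.1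
  have hw₀meas : Measurable w₀ := hw₀sm.measurable
  have hw₀ : MemLp w₀ 2 volume := hw.ae_eq hww₀
  have hker : ∀ x : Fin 3 → ℝ, ∀ᵐ y, k (x - y) = k₀ (x - y) := fun x =>
    (Measure.measurePreserving_sub_left volume x).quasiMeasurePreserving.ae_eq_comp hk₀ae
  -- replace k, w by representatives in the error term
  have hFeq : (fun x =>
        f x * (v x * (∫ y, k (x - y) * w y) - (∫ y, k (x - y) * (v y * w y))) -
          (v x * (∫ y, k (x - y) * (f y * w y)) -
            (∫ y, k (x - y) * (v y * (f y * w y))))) =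
      (fun x =>
        f x * (v x * (∫ y, k₀ (x - y) * w₀ y) - (∫ y, k₀ (x - y) * (v y * w₀ y))) -
          (v x * (∫ y, k₀ (x - y) * (f y * w₀ y)) -
            (∫ y, k₀ (x - y) * (v y * (f y * w₀ y))))) := by
    funext x
    have e1 : (∫ y, k (x - y) * w y) = ∫ y, k₀ (x - y) * w₀ y := by
      refine integral_congr_ae ?_
      filter_upwards [hker x, hww₀] with y h1 h2
      rw [h1, h2]
    have e2 : (∫ y, k (x - y) * (v y * w y)) = ∫ y, k₀ (x - y) * (v y * w₀ y) := by
      refine integral_congr_ae ?_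
      filter_upwards [hker x, hww₀] with y h1 h2
      rw [h1, h2]
    have e3 : (∫ y, k (x - y) * (f y * w y)) = ∫ y, k₀ (x - y) * (f y * w₀ y) := by
      refine integral_congr_ae ?_
      filter_upwards [hker x, hww₀] with y h1 h2
      rw [h1, h2]
    have e4 : (∫ y, k (x - y) * (v y * (f y * w y))) =
        ∫ y, k₀ (x - y) * (v y * (f y * w₀ y)) := by
      refine integral_congr_ae ?_
      filter_upwards [hker x, hww₀] with y h1 h2
      rw [h1, h2]
    rw [e1, e2, e3, e4]
  rw [hFeq, eLpNorm_congr_ae hww₀]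
  -- from now on everything is in terms of k₀, w₀
  set F : (Fin 3 → ℝ) → ℝ := fun x =>
      f x * (v x * (∫ y, k₀ (x - y) * w₀ y) - (∫ y, k₀ (x - y) * (v y * w₀ y))) -
        (v x * (∫ y, k₀ (x - y) * (f y * w₀ y)) -
          (∫ y, k₀ (x - y) * (v y * (f y * w₀ y)))) with hFdef
  set G : (Fin 3 → ℝ) → ℝ≥0∞ := fun x => ∫⁻ y, (‖k₀ (x - y)‖₊ : ℝ≥0∞) * ‖w₀ y‖₊ with hGdef
  have hGmeas : Measurable G :=
    Measurable.lintegral_prod_right'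
      (((hk₀meas.comp (measurable_fst.sub measurable_snd)).nnnorm.coe_nnreal_ennreal).mul
        ((hw₀meas.comp measurable_snd).nnnorm.coe_nnreal_ennreal))
  have hYoung := dc_young k₀ w₀ hk₀meas hw₀meas
  have hW2 : ∫⁻ y, (‖w₀ y‖₊ : ℝ≥0∞) ^ (2:ℝ) = (eLpNorm w₀ 2 volume) ^ (2:ℝ) := by
    rw [eLpNorm_eq_lintegral_rpow_enorm_toReal two_ne_zero ENNReal.ofNat_ne_top, ← ENNReal.rpow_mul]
    norm_num
    rfl
  have hW2fin : ∫⁻ y, (‖w₀ y‖₊ : ℝ≥0∞) ^ (2:ℝ) ≠ ∞ := by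
    rw [hW2]
    exact ENNReal.rpow_ne_top_of_nonneg (by norm_num) hw₀.2.ne
  have hGfin : ∀ᵐ x, G x < ∞ := by
    have hfin2 : I ^ (2:ℝ) < ⊤ := ENNReal.rpow_lt_top_of_nonneg (by norm_num) hIfin
    have h2 : ∀ᵐ x, G x ^ (2:ℝ) < ∞ :=
      ae_lt_top (hGmeas.pow_const _)
        (ne_of_lt (lt_of_le_of_lt hYoung (ENNReal.mul_lt_top hfin2 hW2fin.lt_top)))
    filter_upwards [h2] with x hx
    by_contra hc
    push_neg at hc
    rw [top_le_iff] at hc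
    rw [hc, ENNReal.top_rpow_of_pos (by norm_num)] at hx
    exact lt_irrefl _ hx
  obtain ⟨M, hM⟩ := hfb
  have hM0 : (0:ℝ) ≤ M := le_trans (abs_nonneg _) (hM 0)
  have hvmeas : Measurable v := hv.continuous.measurable
  have hfmeas : Measurable f := hf.continuous.measurable
  -- key pointwise bound
  have key : ∀ᵐ x, (‖F x‖₊ : ℝ≥0∞) ≤ (Kf : ℝ≥0∞) * (Kv : ℝ≥0∞) * G x := by
    filter_upwards [hGfin] with x hGx
    have hkx : Measurable fun y => k₀ (x - y) :=
      hk₀meas.comp (measurable_const.sub measurable_id)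
    have hφm : Measurable fun y => k₀ (x - y) * w₀ y := hkx.mul hw₀meas
    have hφint : Integrable (fun y => k₀ (x - y) * w₀ y) := by
      refine ⟨hφm.aestronglyMeasurable, ?_⟩
      have : ∫⁻ y, (‖k₀ (x - y) * w₀ y‖₊ : ℝ≥0∞) = G x := by
        refine lintegral_congr fun y => ?_
        rw [nnnorm_mul, ENNReal.coe_mul]
      rw [HasFiniteIntegral, show (∫⁻ y, ‖k₀ (x - y) * w₀ y‖ₑ) = G x from this]
      exact hGx
    have hvle : ∀ y, k₀ (x - y) ≠ 0 → |v y| ≤ |v x| + Kv := by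
      intro y hy
      have h1 : ‖x - y‖ ≤ 1 := hsupp₀ _ hy
      have h2 : |v y - v x| ≤ (Kv : ℝ) * ‖x - y‖ := by
        have := hv.dist_le_mul y x
        rwa [Real.dist_eq, dist_eq_norm, norm_sub_rev] at this
      have h3 : (Kv : ℝ) * ‖x - y‖ ≤ Kv := by
        calc (Kv : ℝ) * ‖x - y‖ ≤ (Kv : ℝ) * 1 := by
              exact mul_le_mul_of_nonneg_left h1 Kv.2
          _ = Kv := mul_one _
      calc |v y| = |v x + (v y - v x)| := by ring_nf
        _ ≤ |v x| + |v y - v x| := abs_add_le _ _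
        _ ≤ |v x| + Kv := add_le_add_right (h2.trans h3) _
    have hbound2 : ∀ y, ‖k₀ (x - y) * (v y * w₀ y)‖ ≤
        (|v x| + Kv) * |k₀ (x - y) * w₀ y| := by
      intro y
      by_cases hy : k₀ (x - y) = 0
      · simp [hy]
      · rw [Real.norm_eq_abs, abs_mul, abs_mul, abs_mul]
        calc |k₀ (x - y)| * (|v y| * |w₀ y|) ≤ |k₀ (x - y)| * ((|v x| + Kv) * |w₀ y|) := by
              refine mul_le_mul_of_nonneg_left ?_ (abs_nonneg _)
              exact mul_le_mul_of_nonneg_right (hvle y hy) (abs_nonneg _)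
          _ = (|v x| + Kv) * (|k₀ (x - y)| * |w₀ y|) := by ring
    have hint2 : Integrable (fun y => k₀ (x - y) * (v y * w₀ y)) := by
      refine Integrable.mono' ((hφint.abs).const_mul (|v x| + Kv))
        (hkx.mul (hvmeas.mul hw₀meas)).aestronglyMeasurable ?_
      exact Filter.Eventually.of_forall hbound2
    have hbound3 : ∀ y, ‖k₀ (x - y) * (f y * w₀ y)‖ ≤ M * |k₀ (x - y) * w₀ y| := by
      intro y
      rw [Real.norm_eq_abs, abs_mul, abs_mul, abs_mul]
      calc |k₀ (x - y)| * (|f y| * |w₀ y|) ≤ |k₀ (x - y)| * (M * |w₀ y|) := by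
            refine mul_le_mul_of_nonneg_left ?_ (abs_nonneg _)
            exact mul_le_mul_of_nonneg_right (hM y) (abs_nonneg _)
        _ = M * (|k₀ (x - y)| * |w₀ y|) := by ring
    have hint3 : Integrable (fun y => k₀ (x - y) * (f y * w₀ y)) := by
      refine Integrable.mono' ((hφint.abs).const_mul M)
        (hkx.mul (hfmeas.mul hw₀meas)).aestronglyMeasurable ?_
      exact Filter.Eventually.of_forall hbound3
    have hbound4 : ∀ y, ‖k₀ (x - y) * (v y * (f y * w₀ y))‖ ≤
        ((|v x| + Kv) * M) * |k₀ (x - y) * w₀ y| := by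
      intro y
      by_cases hy : k₀ (x - y) = 0
      · simp [hy]
      · rw [Real.norm_eq_abs, abs_mul, abs_mul, abs_mul, abs_mul]
        have h1 : |v y| * (|f y| * |w₀ y|) ≤ (|v x| + Kv) * (M * |w₀ y|) := by
          calc |v y| * (|f y| * |w₀ y|) ≤ |v y| * (M * |w₀ y|) :=
                mul_le_mul_of_nonneg_left
                  (mul_le_mul_of_nonneg_right (hM y) (abs_nonneg _)) (abs_nonneg _)
            _ ≤ (|v x| + Kv) * (M * |w₀ y|) :=
                mul_le_mul_of_nonneg_right (hvle y hy) (by positivity)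
        calc |k₀ (x - y)| * (|v y| * (|f y| * |w₀ y|)) ≤
              |k₀ (x - y)| * ((|v x| + Kv) * (M * |w₀ y|)) :=
            mul_le_mul_of_nonneg_left h1 (abs_nonneg _)
          _ = ((|v x| + Kv) * M) * (|k₀ (x - y)| * |w₀ y|) := by ring
    have hint4 : Integrable (fun y => k₀ (x - y) * (v y * (f y * w₀ y))) := by
      refine Integrable.mono' ((hφint.abs).const_mul ((|v x| + Kv) * M))
        (hkx.mul (hvmeas.mul (hfmeas.mul hw₀meas))).aestronglyMeasurable ?_
      exact Filter.Eventually.of_forall hbound4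
    have i1 := hφint.const_mul (f x * v x)
    have i2 := hint2.const_mul (f x)
    have i3 := hint3.const_mul (v x)
    have hsplit : ∫ y, k₀ (x - y) * ((v x - v y) * ((f x - f y) * w₀ y)) =
        (f x * v x) * (∫ y, k₀ (x - y) * w₀ y) -
          f x * (∫ y, k₀ (x - y) * (v y * w₀ y)) -
          v x * (∫ y, k₀ (x - y) * (f y * w₀ y)) +
          ∫ y, k₀ (x - y) * (v y * (f y * w₀ y)) := by
      have e0 : (fun y => k₀ (x - y) * ((v x - v y) * ((f x - f y) * w₀ y))) =
          fun y => (f x * v x) * (k₀ (x - y) * w₀ y) - f x * (k₀ (x - y) * (v y * w₀ y)) -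
            v x * (k₀ (x - y) * (f y * w₀ y)) + k₀ (x - y) * (v y * (f y * w₀ y)) :=
        funext fun y => by ring
      have i12 : Integrable (fun y => f x * v x * (k₀ (x - y) * w₀ y) -
          f x * (k₀ (x - y) * (v y * w₀ y))) volume := i1.sub i2
      have i123 : Integrable (fun y => f x * v x * (k₀ (x - y) * w₀ y) -
          f x * (k₀ (x - y) * (v y * w₀ y)) - v x * (k₀ (x - y) * (f y * w₀ y))) volume :=
        i12.sub i3
      rw [e0, integral_add i123 hint4, integral_sub i12 i3,
        integral_sub i1 i2, integral_const_mul, integral_const_mul, integral_const_mul]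
    have hEx : F x = ∫ y, k₀ (x - y) * ((v x - v y) * ((f x - f y) * w₀ y)) := by
      rw [hsplit]; simp only [hFdef]; ring
    rw [hEx]
    calc (‖∫ y, k₀ (x - y) * ((v x - v y) * ((f x - f y) * w₀ y))‖₊ : ℝ≥0∞)
        ≤ ∫⁻ y, (‖k₀ (x - y) * ((v x - v y) * ((f x - f y) * w₀ y))‖₊ : ℝ≥0∞) :=
          enorm_integral_le_lintegral_enorm _
      _ ≤ ∫⁻ y, ((Kf : ℝ≥0∞) * (Kv : ℝ≥0∞)) * ((‖k₀ (x - y)‖₊ : ℝ≥0∞) * ‖w₀ y‖₊) := by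
          refine lintegral_mono fun y => ?_
          by_cases hy : k₀ (x - y) = 0
          · simp [hy]
          · have h1 : ‖x - y‖₊ ≤ 1 := by
              have := hsupp₀ _ hy
              exact this
            have hvd : ‖v x - v y‖₊ ≤ Kv := by
              have := hv.nndist_le x y
              rw [nndist_eq_nnnorm] at this
              calc ‖v x - v y‖₊ ≤ Kv * nndist x y := this
                _ = Kv * ‖x - y‖₊ := by rw [nndist_eq_nnnorm]
                _ ≤ Kv * 1 := mul_le_mul_right h1 _
                _ = Kv := mul_one _
            have hfd : ‖f x - f y‖₊ ≤ Kf := by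
              have := hf.nndist_le x y
              rw [nndist_eq_nnnorm] at this
              calc ‖f x - f y‖₊ ≤ Kf * nndist x y := this
                _ = Kf * ‖x - y‖₊ := by rw [nndist_eq_nnnorm]
                _ ≤ Kf * 1 := mul_le_mul_right h1 _
                _ = Kf := mul_one _
            rw [nnnorm_mul, nnnorm_mul, nnnorm_mul]
            push_cast
            calc (‖k₀ (x - y)‖₊ : ℝ≥0∞) * ((‖v x - v y‖₊ : ℝ≥0∞) *
                  ((‖f x - f y‖₊ : ℝ≥0∞) * (‖w₀ y‖₊ : ℝ≥0∞)))
                ≤ (‖k₀ (x - y)‖₊ : ℝ≥0∞) * ((Kv : ℝ≥0∞) * ((Kf : ℝ≥0∞) * (‖w₀ y‖₊ : ℝ≥0∞))) := by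
                  have hc1 : (‖v x - v y‖₊ : ℝ≥0∞) ≤ (Kv : ℝ≥0∞) := ENNReal.coe_le_coe.2 hvd
                  have hc2 : (‖f x - f y‖₊ : ℝ≥0∞) ≤ (Kf : ℝ≥0∞) := ENNReal.coe_le_coe.2 hfd
                  exact mul_le_mul' le_rfl (mul_le_mul' hc1 (mul_le_mul' hc2 le_rfl))
              _ = (Kf : ℝ≥0∞) * (Kv : ℝ≥0∞) * ((‖k₀ (x - y)‖₊ : ℝ≥0∞) * ‖w₀ y‖₊) := by ring
      _ = (Kf : ℝ≥0∞) * (Kv : ℝ≥0∞) * G x := by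
          rw [lintegral_const_mul' _ _ (by finiteness)]
  -- assemble the L² bound
  have hFle : eLpNorm F 2 volume ≤
      ((Kf : ℝ≥0∞) * Kv * (I * eLpNorm w₀ 2 volume)) := by
    rw [eLpNorm_eq_lintegral_rpow_enorm_toReal two_ne_zero ENNReal.ofNat_ne_top]
    have htr : ((2:ℝ≥0∞).toReal) = (2:ℝ) := by norm_num
    rw [htr]
    have step1 : ∫⁻ x, (‖F x‖₊ : ℝ≥0∞) ^ (2:ℝ) ≤
        ∫⁻ x, ((Kf : ℝ≥0∞) * Kv * G x) ^ (2:ℝ) := by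
      refine lintegral_mono_ae ?_
      filter_upwards [key] with x hx
      exact ENNReal.rpow_le_rpow hx (by norm_num)
    have step2 : ∫⁻ x, ((Kf : ℝ≥0∞) * Kv * G x) ^ (2:ℝ) =
        ((Kf : ℝ≥0∞) * Kv) ^ (2:ℝ) * ∫⁻ x, G x ^ (2:ℝ) := by
      rw [← lintegral_const_mul' _ _
        (ENNReal.rpow_lt_top_of_nonneg (by norm_num)
          (ENNReal.mul_ne_top ENNReal.coe_ne_top ENNReal.coe_ne_top)).ne]
      refine lintegral_congr fun x => ?_
      rw [ENNReal.mul_rpow_of_nonneg _ _ (by norm_num)]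
    calc (∫⁻ x, (‖F x‖₊ : ℝ≥0∞) ^ (2:ℝ)) ^ ((1:ℝ)/2)
        ≤ (((Kf : ℝ≥0∞) * Kv) ^ (2:ℝ) * (I ^ (2:ℝ) * ∫⁻ y, (‖w₀ y‖₊ : ℝ≥0∞) ^ (2:ℝ))) ^ ((1:ℝ)/2) := by
          refine ENNReal.rpow_le_rpow ?_ (by norm_num)
          calc ∫⁻ x, (‖F x‖₊ : ℝ≥0∞) ^ (2:ℝ) ≤ ((Kf : ℝ≥0∞) * Kv) ^ (2:ℝ) * ∫⁻ x, G x ^ (2:ℝ) := by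
                rw [← step2]; exact step1
            _ ≤ ((Kf : ℝ≥0∞) * Kv) ^ (2:ℝ) * (I ^ (2:ℝ) * ∫⁻ y, (‖w₀ y‖₊ : ℝ≥0∞) ^ (2:ℝ)) :=
              mul_le_mul_right hYoung _
      _ = (Kf : ℝ≥0∞) * Kv * (I * eLpNorm w₀ 2 volume) := by
          have hsqrt : ∀ a : ℝ≥0∞, (a ^ (2:ℝ)) ^ ((1:ℝ)/2) = a := fun a => by
            rw [← ENNReal.rpow_mul]; norm_num
          have pack : ∀ a b c : ℝ≥0∞, a ^ (2:ℝ) * (b ^ (2:ℝ) * c ^ (2:ℝ)) =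
              (a * (b * c)) ^ (2:ℝ) := by
            intro a b c
            rw [ENNReal.mul_rpow_of_nonneg a (b * c) (by norm_num : (0:ℝ) ≤ 2),
              ENNReal.mul_rpow_of_nonneg b c (by norm_num : (0:ℝ) ≤ 2)]
          rw [hW2, pack, hsqrt]
  calc eLpNorm F 2 volume ≤ (Kf : ℝ≥0∞) * Kv * (I * eLpNorm w₀ 2 volume) := hFle
    _ ≤ (Kf : ℝ≥0∞) * Kv * (((I.toNNReal + 1 : ℝ≥0) : ℝ≥0∞) * eLpNorm w₀ 2 volume) := by
        gcongr
    _ = ((I.toNNReal + 1 : ℝ≥0) : ℝ≥0∞) * Kf * Kv * eLpNorm w₀ 2 volume := by ring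
end
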